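/- arXiv:0808.1232 — 3 statements merged into one kernel-verified Lean document; each statement's English description precedes it below -/
import Mathlib

section
/- Let G be a finite group and X, Y finite G-sets. If for every subgroup H ≤ G the number of H-fixed points of X equals the number of H-fixed points of Y, then X and Y are isomorphic as G-sets. -/
/-!
Induction on `|X|`. Take `x ∈ X` whose stabilizer is maximal among the stabilizers of points of
`X`. Since `x` is fixed by `Stab x`, so is some `y ∈ Y`, i.e. `Stab x ≤ Stab y`; likewise some
`x' ∈ X` has `Stab y ≤ Stab x'`, and maximality forces `Stab x = Stab y`. Then the orbits of `x`
and `y` are isomorphic `G`-sets. Fixed-point counts are additive over the decomposition of a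
`G`-set into an orbit and its complement, so the complements again have equal counts and are
isomorphic by induction.
-/

open MulAction

namespace SubMulAction

variable {G X Y : Type*} [Group G] [MulAction G X] [MulAction G Y]

def orbit (x : X) : SubMulAction G X where
  carrier := MulAction.orbit G x
  smul_mem' g _ hz := mapsTo_smul_orbit g x hz

theorem exists_orbit_equiv_of_stabilizer_eq {x : X} {y : Y}
    (hxy : stabilizer G x = stabilizer G y) :
    ∃ e : orbit (G := G) x ≃ orbit (G := G) y, ∀ (g : G) z, e (g • z) = g • e z := by
  let e : MulAction.orbit G x ≃ MulAction.orbit G y :=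
    (orbitEquivQuotientStabilizer G x).trans
      ((Subgroup.quotientEquivOfEq hxy).trans (orbitEquivQuotientStabilizer G y).symm)
  have he (a : G) : (e ⟨a • x, mem_orbit x a⟩ : Y) = a • y := by
    have : orbitEquivQuotientStabilizer G x ⟨a • x, mem_orbit x a⟩ = a := by
      rw [← Equiv.eq_symm_apply]
      exact Subtype.ext (orbitEquivQuotientStabilizer_symm_apply G x a).symm
    simp [e, this, Subgroup.quotientEquivOfEq_mk, orbitEquivQuotientStabilizer_symm_apply]
  refine ⟨e, ?_⟩
  rintro g ⟨_, a, rfl⟩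
  apply Subtype.ext
  show (e ⟨g • a • x, _⟩ : Y) = g • (e ⟨a • x, _⟩ : Y)
  simpa only [mul_smul, he a] using he (g * a)

def fixedEquiv (p : SubMulAction G X) (H : Subgroup G) :
    {z : p // ∀ h ∈ H, h • z = z} ≃ {x : {x : X // ∀ h ∈ H, h • x = x} // x.1 ∈ p} where
  toFun z := ⟨⟨z.1, fun h hh ↦ congrArg Subtype.val (z.2 h hh)⟩, z.1.2⟩
  invFun x := ⟨⟨x.1, x.2⟩, fun h hh ↦ Subtype.ext (x.1.2 h hh)⟩

theorem card_fixed_add_card_fixed_compl [Finite X] (p : SubMulAction G X) (H : Subgroup G) :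
    Nat.card {z : p // ∀ h ∈ H, h • z = z} + Nat.card {z : ↥pᶜ // ∀ h ∈ H, h • z = z} =
      Nat.card {x : X // ∀ h ∈ H, h • x = x} := by
  classical
  rw [← Nat.card_sum]
  exact Nat.card_congr <|
    (Equiv.sumCongr (p.fixedEquiv H) (pᶜ.fixedEquiv H)).trans (Equiv.sumCompl _)

theorem exists_equiv_of_exists_equiv_compl (p : SubMulAction G X) (q : SubMulAction G Y)
    (h : ∃ e : p ≃ q, ∀ (g : G) z, e (g • z) = g • e z)
    (hc : ∃ e : ↥pᶜ ≃ ↥qᶜ, ∀ (g : G) z, e (g • z) = g • e z) :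
    ∃ e : X ≃ Y, ∀ (g : G) x, e (g • x) = g • e x := by
  classical
  obtain ⟨e, he⟩ := h
  obtain ⟨f, hf⟩ := hc
  refine ⟨(Equiv.sumCompl (· ∈ p)).symm.trans ((e.sumCongr f).trans (Equiv.sumCompl (· ∈ q))),
    fun g x ↦ ?_⟩
  by_cases hx : x ∈ p
  · have hgx : g • x ∈ p := p.smul_mem g hx
    simp only [Equiv.trans_apply, Equiv.sumCompl_symm_apply_of_pos hx,
      Equiv.sumCompl_symm_apply_of_pos hgx, Equiv.sumCongr_apply, Sum.map_inl]
    exact congrArg Subtype.val (he g ⟨x, hx⟩)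
  · have hgx : g • x ∉ p := (p.smul_mem_iff' g).not.mpr hx
    simp only [Equiv.trans_apply, Equiv.sumCompl_symm_apply_of_neg hx,
      Equiv.sumCompl_symm_apply_of_neg hgx, Equiv.sumCongr_apply, Sum.map_inr]
    exact congrArg Subtype.val (hf g ⟨x, hx⟩)

end SubMulAction

namespace MulAction

variable {G X Y : Type*} [Group G] [MulAction G X] [MulAction G Y]

theorem card_fixed_congr (e : X ≃ Y) (he : ∀ (g : G) (x : X), e (g • x) = g • e x)
    (H : Subgroup G) :
    Nat.card {x : X // ∀ h ∈ H, h • x = x} = Nat.card {y : Y // ∀ h ∈ H, h • y = y} :=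
  Nat.card_congr <| e.subtypeEquiv fun x ↦ by simp only [← he, e.apply_eq_iff_eq]

theorem card_eq_of_card_fixed_eq
    (h : ∀ H : Subgroup G,
      Nat.card {x : X // ∀ h ∈ H, h • x = x} = Nat.card {y : Y // ∀ h ∈ H, h • y = y}) :
    Nat.card X = Nat.card Y := by
  simpa using h ⊥

theorem exists_stabilizer_le_of_card_fixed_eq [Finite X]
    (h : ∀ H : Subgroup G,
      Nat.card {x : X // ∀ h ∈ H, h • x = x} = Nat.card {y : Y // ∀ h ∈ H, h • y = y})
    (x : X) : ∃ y : Y, stabilizer G x ≤ stabilizer G y := by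
  have hx : 0 < Nat.card {z : X // ∀ h ∈ stabilizer G x, h • z = z} :=
    Nat.card_pos_iff.mpr ⟨⟨x, fun _ hh ↦ hh⟩, inferInstance⟩
  obtain ⟨⟨y, hy⟩⟩ := (Nat.card_pos_iff.mp (h _ ▸ hx)).1
  exact ⟨y, hy⟩

theorem exists_stabilizer_eq_of_card_fixed_eq [Finite X] [Finite Y] [Nonempty X]
    (h : ∀ H : Subgroup G,
      Nat.card {x : X // ∀ h ∈ H, h • x = x} = Nat.card {y : Y // ∀ h ∈ H, h • y = y}) :
    ∃ (x : X) (y : Y), stabilizer G x = stabilizer G y := by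
  obtain ⟨x, -, hmax⟩ := Set.finite_univ.exists_maximalFor (fun x : X ↦ stabilizer G x) _
    Set.univ_nonempty
  obtain ⟨y, hxy⟩ := exists_stabilizer_le_of_card_fixed_eq h x
  obtain ⟨x', hyx'⟩ := exists_stabilizer_le_of_card_fixed_eq (fun H ↦ (h H).symm) y
  exact ⟨x, y, hxy.antisymm (hyx'.trans (hmax trivial (hxy.trans hyx')))⟩

theorem exists_equiv_of_card_fixed_eq [Finite X] [Finite Y]
    (h : ∀ H : Subgroup G,
      Nat.card {x : X // ∀ h ∈ H, h • x = x} = Nat.card {y : Y // ∀ h ∈ H, h • y = y}) :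
    ∃ e : X ≃ Y, ∀ (g : G) (x : X), e (g • x) = g • e x := by
  induction hn : Nat.card X using Nat.strong_induction_on generalizing X Y with
  | _ n ih =>
  cases isEmpty_or_nonempty X with
  | inl hXempty =>
    have : IsEmpty Y := Finite.card_eq_zero_iff.mp <|
      card_eq_of_card_fixed_eq h ▸ Finite.card_eq_zero_iff.mpr hXempty
    exact ⟨Equiv.equivOfIsEmpty X Y, fun _ x ↦ isEmptyElim x⟩
  | inr hXne =>
    obtain ⟨x, y, hxy⟩ := exists_stabilizer_eq_of_card_fixed_eq h
    obtain ⟨e, he⟩ := SubMulAction.exists_orbit_equiv_of_stabilizer_eq hxy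
    refine (SubMulAction.orbit x).exists_equiv_of_exists_equiv_compl (SubMulAction.orbit y)
      ⟨e, he⟩ (ih _ ?_ (fun H ↦ ?_) rfl)
    · exact hn ▸ Finite.card_subtype_lt (p := (· ∈ (SubMulAction.orbit x)ᶜ)) (x := x)
        fun hx ↦ hx (mem_orbit_self x)
    · have hsplitX := (SubMulAction.orbit x).card_fixed_add_card_fixed_compl H
      have hsplitY := (SubMulAction.orbit y).card_fixed_add_card_fixed_compl H
      have horbit := card_fixed_congr e he H
      linarith [h H]

end MulAction

theorem gset_iso_of_fixedPoints_card_eq_general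
    (G X Y : Type*) [Group G] [Fintype X] [Fintype Y]
    [MulAction G X] [MulAction G Y]
    (h : ∀ H : Subgroup G,
      Nat.card {x : X // ∀ h ∈ H, h • x = x} =
        Nat.card {y : Y // ∀ h ∈ H, h • y = y}) :
    ∃ e : X ≃ Y, ∀ (g : G) (x : X), e (g • x) = g • e x :=
  MulAction.exists_equiv_of_card_fixed_eq h

/-- Burnside's theorem: two finite `G`-sets with the same number of `H`-fixed
points for every subgroup `H ≤ G` are isomorphic as `G`-sets. -/
theorem gset_iso_of_fixedPoints_card_eq
    (G X Y : Type*) [Group G] [Fintype G] [Fintype X] [Fintype Y]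
    [MulAction G X] [MulAction G Y]
    (h : ∀ H : Subgroup G,
      Nat.card {x : X // ∀ h ∈ H, h • x = x} =
        Nat.card {y : Y // ∀ h ∈ H, h • y = y}) :
    ∃ e : X ≃ Y, ∀ (g : G) (x : X), e (g • x) = g • e x :=
  gset_iso_of_fixedPoints_card_eq_general G X Y h
end

section
/- Let A be a finite abelian group of odd order and G = A ⋊ ⟨i⟩ the semidirect product where i acts on A by inversion. Then for every subgroup N ≤ A, the subgroup ⟨N, i⟩ of G is self-normalizing, i.e., N_G(⟨N,i⟩) = ⟨N,i⟩. -/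
/-!
Conjugating `i` by `a ∈ A` gives `a * i * a⁻¹ = a ^ 2 * i`. Every element of `⟨N, i⟩` lies in `N`
or in `N * i`, and `a ^ 2 * i ∉ A`, so if `a` normalizes `⟨N, i⟩` then `a ^ 2 ∈ N`; as `a` has odd
order it is a power of `a ^ 2`, hence `a ∈ N`. An arbitrary normalizing `g` is `a` or `a * i`.
-/

open Subgroup

section

variable {G : Type*} [Group G]

theorem Subgroup.mem_of_sq_mem_of_odd_orderOf {N : Subgroup G} {a : G} (ha : Odd (orderOf a))
    (h : a ^ 2 ∈ N) : a ∈ N := by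
  obtain ⟨k, hk⟩ := ha
  have hpow : (a ^ 2) ^ (k + 1) = a := by
    rw [← pow_mul, show 2 * (k + 1) = orderOf a + 1 by omega, pow_succ, pow_orderOf_eq_one,
      one_mul]
  simpa only [hpow] using N.pow_mem h (k + 1)

theorem Subgroup.mem_normalizer_of_mul_self_eq_one {M : Subgroup G} {i : G} (hi : i * i = 1)
    (hM : ∀ a ∈ M, i * a * i⁻¹ ∈ M) : i ∈ normalizer (M : Set G) := by
  have hii : i⁻¹ = i := inv_eq_of_mul_eq_one_right hi
  refine mem_normalizer_iff.mpr fun a => ⟨hM a, fun ha => ?_⟩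
  have hconj : i * (i * a * i⁻¹) * i⁻¹ = a := by
    calc i * (i * a * i⁻¹) * i⁻¹ = (i * i) * a * (i * i) := by rw [hii]; group
      _ = a := by rw [hi, one_mul, mul_one]
  simpa only [hconj] using hM _ ha

theorem zpow_eq_one_or_eq_of_mul_self_eq_one {i : G} (hi : i * i = 1) (k : ℤ) :
    i ^ k = 1 ∨ i ^ k = i := by
  have hsq : i ^ (2 : ℤ) = 1 := by rw [zpow_two, hi]
  obtain ⟨n, rfl | rfl⟩ := Int.even_or_odd' k
  · exact .inl (by rw [zpow_mul, hsq, one_zpow])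
  · exact .inr (by rw [zpow_add_one, zpow_mul, hsq, one_zpow, one_mul])

theorem Subgroup.mem_or_mul_mem_of_mem_sup_zpowers {M : Subgroup G} {i g : G} (hi : i * i = 1)
    (hiM : i ∈ normalizer (M : Set G)) (hg : g ∈ M ⊔ zpowers i) : g ∈ M ∨ g * i ∈ M := by
  have hle : zpowers i ≤ normalizer (M : Set G) := zpowers_le.mpr hiM
  rw [← SetLike.mem_coe, coe_mul_of_right_le_normalizer_left M _ hle] at hg
  obtain ⟨m, hm, _, ⟨k, rfl⟩, rfl⟩ := hg
  rcases zpow_eq_one_or_eq_of_mul_self_eq_one hi k with h | h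
  · exact .inl (by simpa only [h, mul_one, SetLike.mem_coe] using hm)
  · exact .inr (by simpa only [h, mul_assoc, hi, mul_one, SetLike.mem_coe] using hm)

end

theorem gen_dihedral_self_normalizing_general
    (G : Type*) [Group G] (A : Subgroup G) (i : G)
    (hodd : Odd (Nat.card A))
    (hi : i * i = 1) (hiA : i ∉ A)
    (hinv : ∀ a ∈ A, i * a * i⁻¹ = a⁻¹)
    (hgen : A ⊔ Subgroup.zpowers i = ⊤)
    (N : Subgroup G) (hN : N ≤ A) :
    Subgroup.normalizer ((N ⊔ Subgroup.zpowers i : Subgroup G) : Set G) = N ⊔ Subgroup.zpowers i := by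
  set H := N ⊔ zpowers i
  have hiH : i ∈ H := mem_sup_right (mem_zpowers i)
  have hiNA : i ∈ normalizer (A : Set G) :=
    mem_normalizer_of_mul_self_eq_one hi fun a ha => hinv a ha ▸ inv_mem ha
  have hiN : i ∈ normalizer (N : Set G) :=
    mem_normalizer_of_mul_self_eq_one hi fun a ha => hinv a (hN ha) ▸ inv_mem ha
  suffices hA : ∀ a ∈ A, a ∈ normalizer (H : Set G) → a ∈ H by
    refine le_antisymm (fun g hg => ?_) le_normalizer
    rcases mem_or_mul_mem_of_mem_sup_zpowers hi hiNA (hgen ▸ mem_top g) with hgA | hgiA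
    · exact hA g hgA hg
    · simpa using mul_mem (hA _ hgiA (mul_mem hg (le_normalizer hiH))) (inv_mem hiH)
  intro a ha haH
  have hconj : a * i * a⁻¹ = a ^ 2 * i := by
    have h := hinv a⁻¹ (inv_mem ha)
    rw [inv_inv] at h
    calc a * i * a⁻¹ = a * (i * a⁻¹ * i⁻¹) * i := by group
      _ = a ^ 2 * i := by rw [h, sq]
  have hsqi : a ^ 2 * i ∈ H := hconj ▸ (mem_normalizer_iff.mp haH i).mp hiH
  rcases mem_or_mul_mem_of_mem_sup_zpowers hi hiN hsqi with h | h
  · refine absurd ?_ hiA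
    simpa using mul_mem (inv_mem (pow_mem ha 2)) (hN h)
  · have hodd_a : Odd (orderOf a) := hodd.of_dvd_nat (Subgroup.orderOf_dvd_natCard A ha)
    rw [mul_assoc, hi, mul_one] at h
    exact mem_sup_left (mem_of_sq_mem_of_odd_orderOf hodd_a h)

/-- In the generalized dihedral group `G = A ⋊ ⟨i⟩` of a finite abelian group
`A` of odd order (with `i` acting by inversion), the subgroup `⟨N, i⟩` is
self-normalizing for every subgroup `N ≤ A`. -/
theorem gen_dihedral_self_normalizing
    (G : Type*) [Group G] [Fintype G] (A : Subgroup G) (i : G)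
    (hcomm : ∀ a ∈ A, ∀ b ∈ A, a * b = b * a)
    (hodd : Odd (Nat.card A))
    (hi : i * i = 1) (hiA : i ∉ A)
    (hinv : ∀ a ∈ A, i * a * i⁻¹ = a⁻¹)
    (hgen : A ⊔ Subgroup.zpowers i = ⊤)
    (N : Subgroup G) (hN : N ≤ A) :
    Subgroup.normalizer ((N ⊔ Subgroup.zpowers i : Subgroup G) : Set G) = N ⊔ Subgroup.zpowers i :=
  gen_dihedral_self_normalizing_general G A i hodd hi hiA hinv hgen N hN
end

section
/- Let A be a finite abelian group of odd order and G = A ⋊ ⟨i⟩ the generalized dihedral group (i acting by inversion). Then every subgroup of G is either a subgroup of A, or conjugate to ⟨N, i⟩ for a unique subgroup N ≤ A. Moreover each subgroup N ≤ A is normal in G, and the conjugacy class of ⟨N, i⟩ has exactly |A:N| elements. -/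
/-!
Write `G = A ⊔ ⟨i⟩`. Every element of `G` lies in `A` or in the coset `A i`, every `a i` with
`a ∈ A` is an involution inverting `A`, and hence every subgroup `N ≤ A` is normal. A subgroup
`K ⊄ A` contains some `a i`, and then `K = (K ⊓ A) ⊔ ⟨a i⟩`. The conjugates of `i` are the
elements `b² i` with `b ∈ A`; since `|A|` is odd, squaring is onto `A`, so they are all of `A i`.
Thus the conjugates of `N ⊔ ⟨i⟩` are the subgroups `N ⊔ ⟨a i⟩`, `a ∈ A`, which meet `A` in `N`
(whence uniqueness) and coincide exactly when `a` and `a'` lie in the same coset of `N`.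
-/

namespace Subgroup

variable {G : Type*} [Group G] {N : Subgroup G} {j x : G}

theorem mem_zpowers_iff_of_mul_self_eq_one (hj : j * j = 1) : x ∈ zpowers j ↔ x = 1 ∨ x = j := by
  have hj2 : j ^ (2 : ℤ) = 1 := by rw [zpow_two, hj]
  constructor
  · rintro ⟨k, rfl⟩
    obtain ⟨m, rfl | rfl⟩ := Int.even_or_odd' k
    · left; simp only [zpow_mul, hj2, one_zpow]
    · right; simp only [zpow_add_one, zpow_mul, hj2, one_zpow, one_mul]
  · rintro (rfl | rfl)
    exacts [one_mem _, mem_zpowers _]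

theorem mem_sup_zpowers_iff_of_mul_self_eq_one (hj : j * j = 1) (hjN : j ∈ normalizer N) :
    x ∈ N ⊔ zpowers j ↔ x ∈ N ∨ ∃ n ∈ N, x = n * j := by
  rw [← SetLike.mem_coe, coe_mul_of_right_le_normalizer_left N _ (zpowers_le.mpr hjN),
    Set.mem_mul]
  simp only [SetLike.mem_coe, mem_zpowers_iff_of_mul_self_eq_one hj]
  constructor
  · rintro ⟨n, hn, z, rfl | rfl, rfl⟩
    exacts [Or.inl (by rwa [mul_one]), Or.inr ⟨n, hn, rfl⟩]
  · rintro (hx | ⟨n, hn, rfl⟩)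
    exacts [⟨x, hx, 1, Or.inl rfl, mul_one x⟩, ⟨n, hn, j, Or.inr rfl, rfl⟩]

theorem Normal.map_conj_sup_zpowers (hN : N.Normal) (g j : G) :
    Subgroup.map (MulAut.conj g).toMonoidHom (N ⊔ zpowers j) = N ⊔ zpowers (g * j * g⁻¹) := by
  rw [map_sup, MonoidHom.map_zpowers]
  have := hN
  exact congrArg₂ _ (Normal.map_conj_eq N g) rfl

end Subgroup

open Subgroup

structure IsGenDihedral {G : Type*} [Group G] (A : Subgroup G) (i : G) : Prop where
  mul_comm : ∀ a ∈ A, ∀ b ∈ A, a * b = b * a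
  mul_self : i * i = 1
  conj_eq_inv : ∀ a ∈ A, i * a * i⁻¹ = a⁻¹
  sup_eq_top : A ⊔ zpowers i = ⊤

namespace IsGenDihedral

variable {G : Type*} [Group G] {A N K : Subgroup G} {i a b x : G}

theorem mem_normalizer (hD : IsGenDihedral A i) : i ∈ normalizer A := by
  refine mem_normalizer_iff.mpr fun h => ⟨fun hh => ?_, fun hh => ?_⟩
  · rw [hD.conj_eq_inv h hh]
    exact inv_mem hh
  · have h_eq : i * (i * h * i⁻¹) * i⁻¹ = h := by
      calc i * (i * h * i⁻¹) * i⁻¹ = i * i * h * (i * i)⁻¹ := by group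
        _ = h := by rw [hD.mul_self, one_mul, inv_one, mul_one]
    rw [← h_eq, hD.conj_eq_inv _ hh]
    exact inv_mem hh

theorem mem_or_exists_eq_mul (hD : IsGenDihedral A i) (g : G) : g ∈ A ∨ ∃ a ∈ A, g = a * i :=
  (mem_sup_zpowers_iff_of_mul_self_eq_one hD.mul_self hD.mem_normalizer).mp
    (hD.sup_eq_top ▸ mem_top g)

theorem conj_mul_eq_inv (hD : IsGenDihedral A i) (ha : a ∈ A) (hb : b ∈ A) :
    a * i * b * (a * i)⁻¹ = b⁻¹ := by
  calc a * i * b * (a * i)⁻¹ = a * (i * b * i⁻¹) * a⁻¹ := by group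
    _ = b⁻¹ := by rw [hD.conj_eq_inv b hb, hD.mul_comm a ha _ (inv_mem hb), mul_inv_cancel_right]

theorem mul_mul_self (hD : IsGenDihedral A i) (ha : a ∈ A) : a * i * (a * i) = 1 := by
  calc a * i * (a * i) = a * (i * a * i⁻¹) * (i * i) := by group
    _ = 1 := by rw [hD.conj_eq_inv a ha, hD.mul_self, mul_one, mul_inv_cancel]

theorem normal_of_le (hD : IsGenDihedral A i) (hN : N ≤ A) : N.Normal := by
  refine ⟨fun n hn g => ?_⟩
  rcases hD.mem_or_exists_eq_mul g with hg | ⟨a, ha, rfl⟩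
  · rwa [hD.mul_comm g hg n (hN hn), mul_inv_cancel_right]
  · rw [hD.conj_mul_eq_inv ha (hN hn)]
    exact inv_mem hn

theorem mem_sup_zpowers_mul_iff (hD : IsGenDihedral A i) (hN : N ≤ A) (ha : a ∈ A) :
    x ∈ N ⊔ zpowers (a * i) ↔ x ∈ N ∨ ∃ n ∈ N, x = n * (a * i) :=
  mem_sup_zpowers_iff_of_mul_self_eq_one (hD.mul_mul_self ha)
    (normalizer_eq_top_iff.mpr (hD.normal_of_le hN) ▸ mem_top _)

theorem conj_eq_mul_self_mul (hD : IsGenDihedral A i) (hb : b ∈ A) :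
    b * i * b⁻¹ = b * b * i := by
  calc b * i * b⁻¹ = b * (i * b⁻¹ * i⁻¹) * i := by group
    _ = b * b * i := by rw [hD.conj_eq_inv _ (inv_mem hb), inv_inv]

theorem exists_conj_eq_iff (hD : IsGenDihedral A i) (hodd : Odd (Nat.card A)) :
    (∃ g, g * i * g⁻¹ = x) ↔ ∃ a ∈ A, x = a * i := by
  constructor
  · rintro ⟨g, rfl⟩
    rcases hD.mem_or_exists_eq_mul g with hg | ⟨b, hb, rfl⟩
    · exact ⟨g * g, mul_mem hg hg, hD.conj_eq_mul_self_mul hg⟩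
    · refine ⟨b * b, mul_mem hb hb, ?_⟩
      rw [← hD.conj_eq_mul_self_mul hb]
      group
  · rintro ⟨a, ha, rfl⟩
    obtain ⟨b, hb⟩ := (Nat.Coprime.pow_left_bijective (Nat.coprime_two_right.mpr hodd)).2
      (⟨a, ha⟩ : A)
    have hb' : ((b ^ 2 : A) : G) = a := congrArg Subtype.val hb
    refine ⟨b, ?_⟩
    rw [hD.conj_eq_mul_self_mul b.2, ← pow_two, ← coe_pow, hb']

theorem exists_map_conj_eq_iff (hD : IsGenDihedral A i) (hodd : Odd (Nat.card A)) (hN : N ≤ A) :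
    (∃ g : G, K = map (MulAut.conj g).toMonoidHom (N ⊔ zpowers i)) ↔
      ∃ a ∈ A, K = N ⊔ zpowers (a * i) := by
  simp only [(hD.normal_of_le hN).map_conj_sup_zpowers]
  constructor
  · rintro ⟨g, rfl⟩
    obtain ⟨a, ha, h⟩ := (hD.exists_conj_eq_iff hodd).mp ⟨g, rfl⟩
    exact ⟨a, ha, by rw [h]⟩
  · rintro ⟨a, ha, rfl⟩
    obtain ⟨g, hg⟩ := (hD.exists_conj_eq_iff hodd).mpr ⟨a, ha, rfl⟩
    exact ⟨g, by rw [hg]⟩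

theorem sup_zpowers_mul_inf (hD : IsGenDihedral A i) (hiA : i ∉ A) (hN : N ≤ A) (ha : a ∈ A) :
    (N ⊔ zpowers (a * i)) ⊓ A = N := by
  refine le_antisymm (fun x ⟨hx, hxA⟩ => ?_) (le_inf le_sup_left hN)
  rcases (hD.mem_sup_zpowers_mul_iff hN ha).mp hx with hxN | ⟨n, hn, rfl⟩
  · exact hxN
  · exact absurd ((mul_mem_cancel_left (mul_mem (hN hn) ha)).mp (by rwa [← mul_assoc] at hxA)) hiA

theorem mul_mem_sup_zpowers_mul_iff (hD : IsGenDihedral A i) (hiA : i ∉ A) (hN : N ≤ A)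
    (ha : a ∈ A) (hb : b ∈ A) : b * i ∈ N ⊔ zpowers (a * i) ↔ b * a⁻¹ ∈ N := by
  rw [hD.mem_sup_zpowers_mul_iff hN ha]
  constructor
  · rintro (hbi | ⟨n, hn, h⟩)
    · exact absurd ((mul_mem_cancel_left hb).mp (hN hbi)) hiA
    · rw [← mul_assoc, mul_left_inj] at h
      rwa [h, mul_inv_cancel_right]
  · intro h
    exact Or.inr ⟨b * a⁻¹, h, by group⟩

theorem sup_zpowers_mul_eq_iff (hD : IsGenDihedral A i) (hiA : i ∉ A) (hN : N ≤ A)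
    (ha : a ∈ A) (hb : b ∈ A) :
    N ⊔ zpowers (a * i) = N ⊔ zpowers (b * i) ↔ b * a⁻¹ ∈ N := by
  have hle : ∀ {a b}, a ∈ A → b ∈ A → b * a⁻¹ ∈ N →
      N ⊔ zpowers (b * i) ≤ N ⊔ zpowers (a * i) := fun ha hb h =>
    sup_le le_sup_left (zpowers_le.mpr ((hD.mul_mem_sup_zpowers_mul_iff hiA hN ha hb).mpr h))
  refine ⟨fun h => (hD.mul_mem_sup_zpowers_mul_iff hiA hN ha hb).mp ?_, fun h => ?_⟩
  · exact h ▸ mem_sup_right (mem_zpowers _)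
  · exact le_antisymm (hle hb ha (by simpa using N.inv_mem h)) (hle ha hb h)

theorem eq_inf_sup_zpowers (hD : IsGenDihedral A i) (ha : a ∈ A) (hK : a * i ∈ K) :
    K = (K ⊓ A) ⊔ zpowers (a * i) := by
  refine le_antisymm (fun x hx => ?_) (sup_le inf_le_left (zpowers_le.mpr hK))
  rcases hD.mem_or_exists_eq_mul x with hxA | ⟨c, hc, rfl⟩
  · exact mem_sup_left ⟨hx, hxA⟩
  · have hcK : c * a⁻¹ ∈ K := by
      simpa [mul_assoc] using mul_mem hx (inv_mem hK)
    have h_eq : c * i = c * a⁻¹ * (a * i) := by group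
    rw [h_eq]
    exact mul_mem_sup (mem_inf.mpr ⟨hcK, mul_mem hc (inv_mem ha)⟩) (mem_zpowers _)

theorem existsUnique_conj_sup_zpowers (hD : IsGenDihedral A i) (hiA : i ∉ A)
    (hodd : Odd (Nat.card A)) (hK : ¬K ≤ A) :
    ∃! N : Subgroup G, N ≤ A ∧
      ∃ g : G, K = map (MulAut.conj g).toMonoidHom (N ⊔ zpowers i) := by
  obtain ⟨k, hkK, hkA⟩ := SetLike.not_le_iff_exists.mp hK
  obtain ⟨a, ha, rfl⟩ := (hD.mem_or_exists_eq_mul k).resolve_left hkA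
  refine ⟨K ⊓ A, ⟨inf_le_right, ?_⟩, fun N ⟨hN, hconj⟩ => ?_⟩
  · exact (hD.exists_map_conj_eq_iff hodd inf_le_right).mpr ⟨a, ha, hD.eq_inf_sup_zpowers ha hkK⟩
  · obtain ⟨b, hb, rfl⟩ := (hD.exists_map_conj_eq_iff hodd hN).mp hconj
    exact (hD.sup_zpowers_mul_inf hiA hN hb).symm

theorem card_conj_sup_zpowers (hD : IsGenDihedral A i) (hiA : i ∉ A)
    (hodd : Odd (Nat.card A)) (hN : N ≤ A) :
    Nat.card {K : Subgroup G //
      ∃ g : G, K = map (MulAut.conj g).toMonoidHom (N ⊔ zpowers i)} = (N.subgroupOf A).index := by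
  have hrel : ∀ a b : A, (QuotientGroup.leftRel (N.subgroupOf A)) a b ↔
      N ⊔ zpowers (a * i) = N ⊔ zpowers (b * i) := fun a b => by
    rw [QuotientGroup.leftRel_apply, mem_subgroupOf, hD.sup_zpowers_mul_eq_iff hiA hN a.2 b.2,
      coe_mul, coe_inv, hD.mul_comm _ (inv_mem a.2) _ b.2]
  let f : A ⧸ N.subgroupOf A →
      {K : Subgroup G // ∃ g : G, K = map (MulAut.conj g).toMonoidHom (N ⊔ zpowers i)} :=
    Quotient.lift (fun a => ⟨N ⊔ zpowers (a * i),
        (hD.exists_map_conj_eq_iff hodd hN).mpr ⟨a, a.2, rfl⟩⟩)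
      fun a b h => Subtype.ext ((hrel a b).mp h)
  refine (Nat.card_eq_of_bijective f ⟨?_, ?_⟩).symm
  · rintro ⟨a⟩ ⟨b⟩ h
    exact Quotient.sound ((hrel a b).mpr (congrArg Subtype.val h))
  · rintro ⟨K, hK⟩
    obtain ⟨a, ha, rfl⟩ := (hD.exists_map_conj_eq_iff hodd hN).mp hK
    exact ⟨Quotient.mk _ ⟨a, ha⟩, rfl⟩

end IsGenDihedral

theorem gen_dihedral_subgroup_classification_general
    (G : Type*) [Group G] (A : Subgroup G) (i : G)
    (hcomm : ∀ a ∈ A, ∀ b ∈ A, a * b = b * a)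
    (hodd : Odd (Nat.card A))
    (hi : i * i = 1) (hiA : i ∉ A)
    (hinv : ∀ a ∈ A, i * a * i⁻¹ = a⁻¹)
    (hgen : A ⊔ Subgroup.zpowers i = ⊤) :
    (∀ K : Subgroup G, K ≤ A ∨
        ∃! N : Subgroup G, N ≤ A ∧
          ∃ g : G, K = Subgroup.map (MulAut.conj g).toMonoidHom
            (N ⊔ Subgroup.zpowers i)) ∧
      (∀ N : Subgroup G, N ≤ A → N.Normal) ∧
      (∀ N : Subgroup G, N ≤ A →
        Nat.card {K : Subgroup G //
            ∃ g : G, K = Subgroup.map (MulAut.conj g).toMonoidHom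
              (N ⊔ Subgroup.zpowers i)} = (N.subgroupOf A).index) := by
  have hD : IsGenDihedral A i := ⟨hcomm, hi, hinv, hgen⟩
  exact ⟨fun K => or_iff_not_imp_left.mpr (hD.existsUnique_conj_sup_zpowers hiA hodd),
    fun N => hD.normal_of_le, fun N => hD.card_conj_sup_zpowers hiA hodd⟩

/-- In the generalized dihedral group `G = A ⋊ ⟨i⟩` of a finite abelian group
`A` of odd order: every subgroup of `G` is either contained in `A`, or
conjugate to `⟨N, i⟩` for a unique subgroup `N ≤ A`; moreover every subgroup
`N ≤ A` is normal in `G`, and the conjugacy class of `⟨N, i⟩` has exactly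
`|A : N|` elements. -/
theorem gen_dihedral_subgroup_classification
    (G : Type*) [Group G] [Fintype G] (A : Subgroup G) (i : G)
    (hcomm : ∀ a ∈ A, ∀ b ∈ A, a * b = b * a)
    (hodd : Odd (Nat.card A))
    (hi : i * i = 1) (hiA : i ∉ A)
    (hinv : ∀ a ∈ A, i * a * i⁻¹ = a⁻¹)
    (hgen : A ⊔ Subgroup.zpowers i = ⊤) :
    (∀ K : Subgroup G, K ≤ A ∨
        ∃! N : Subgroup G, N ≤ A ∧
          ∃ g : G, K = Subgroup.map (MulAut.conj g).toMonoidHom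
            (N ⊔ Subgroup.zpowers i)) ∧
      (∀ N : Subgroup G, N ≤ A → N.Normal) ∧
      (∀ N : Subgroup G, N ≤ A →
        Nat.card {K : Subgroup G //
            ∃ g : G, K = Subgroup.map (MulAut.conj g).toMonoidHom
              (N ⊔ Subgroup.zpowers i)} = (N.subgroupOf A).index) :=
  gen_dihedral_subgroup_classification_general G A i hcomm hodd hi hiA hinv hgen
end
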